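/- The one-nondeterministic-step Büchi automaton over a finite alphabet Σ, with states s0 (accepting, initial) and s1 (rejecting sink), where s0 has a self-loop on every letter, a transition on every letter to s1, and s1 has a self-loop on every letter, specifies exactly the hyperproperty of all safety properties: the set {A^f | f a resolver of A} equals {P ⊆ Σ^ω | P is a safety property}. -/

import Mathlib

open Filter

/-- A (nondeterministic) Büchi automaton over alphabet `σ` with state type `Q`:
initial state, total transition relation, and set of accepting states. -/
structure BAut (σ : Type) (Q : Type) where
  init : Q
  Δ : Q → σ → Q → Prop
  total : ∀ q a, ∃ q', Δ q a q'
  F : Q → Prop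

namespace BAut

variable {σ Q : Type}

/-- The last state of a history. -/
def hlast (A : BAut σ Q) (h : List (σ × Q)) : Q :=
  (h.getLast?.map Prod.snd).getD A.init

/-- A resolver: maps each history and next letter to a successor state consistent with Δ. -/
structure Resolver (A : BAut σ Q) where
  f : List (σ × Q) → σ → Q
  consistent : ∀ h a, A.Δ (A.hlast h) a (f h a)

/-- The history produced by a resolver on the first `n` letters of a word. -/
def Resolver.hist {A : BAut σ Q} (r : Resolver A) (w : ℕ → σ) : ℕ → List (σ × Q)
  | 0 => []
  | n + 1 => r.hist w n ++ [(w n, r.f (r.hist w n) (w n))]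

/-- The unique run induced by a resolver on a word. -/
def Resolver.run {A : BAut σ Q} (r : Resolver A) (w : ℕ → σ) : ℕ → Q
  | 0 => A.init
  | n + 1 => r.f (r.hist w n) (w n)

/-- Büchi acceptance: the run induced by `r` on `w` visits accepting states
infinitely often. -/
def Acc (A : BAut σ Q) (r : Resolver A) (w : ℕ → σ) : Prop :=
  ∃ᶠ n in atTop, A.F (r.run w n)

/-- `A^f`: the trace property (language) specified by `A` with resolver `f`. -/
def Lang (A : BAut σ Q) (r : Resolver A) : Set (ℕ → σ) := {w | A.Acc r w}

/-- The hyperproperty specified by `A`: the set of trace properties `A^f` for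
resolvers `f` of `A`. -/
def Hyper (A : BAut σ Q) : Set (Set (ℕ → σ)) := {P | ∃ r : Resolver A, A.Lang r = P}

end BAut

/-- `P` is a safety property: every word not in `P` has a finite prefix none of whose
extensions is in `P`. -/
def IsSafety {σ : Type} (P : Set (ℕ → σ)) : Prop :=
  ∀ w, w ∉ P → ∃ n : ℕ, ∀ w' : ℕ → σ, (∀ i < n, w' i = w i) → w' ∉ P

/-- `P` is a co-safety property: every word in `P` has a finite prefix all of whose
extensions are in `P`. -/
def IsCoSafety {σ : Type} (P : Set (ℕ → σ)) : Prop :=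
  ∀ w ∈ P, ∃ n : ℕ, ∀ w' : ℕ → σ, (∀ i < n, w' i = w i) → w' ∈ P

/-- The two states of the one-nondeterministic-step automaton. -/
inductive S2 where
  | s0 | s1
  deriving DecidableEq

instance : Fintype S2 where
  elems := {S2.s0, S2.s1}
  complete := by
    intro x
    cases x <;> simp

/-- The one-nondeterministic-step safety (Büchi) automaton: `s0` is accepting and
initial, with a self-loop on every letter and a transition on every letter to the
rejecting sink `s1`, which loops on every letter. -/
def safeAut (σ : Type) : BAut σ S2 where
  init := .s0
  Δ := fun q _ q' => match q with | .s0 => True | .s1 => q' = .s1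
  total := by
    intro q a
    cases q
    · exact ⟨.s0, trivial⟩
    · exact ⟨.s1, rfl⟩
  F := fun q => q = .s0

namespace SafeAux

open BAut

variable {σ Q : Type}

theorem hlast_hist (A : BAut σ Q) (r : Resolver A) (w : ℕ → σ) (n : ℕ) :
    A.hlast (r.hist w n) = r.run w n := by
  cases n with
  | zero => rfl
  | succ n =>
    simp [Resolver.hist, Resolver.run, BAut.hlast]

theorem hist_congr (A : BAut σ Q) (r : Resolver A) {w w' : ℕ → σ} :
    ∀ n, (∀ i < n, w' i = w i) → r.hist w' n = r.hist w n
  | 0, _ => rfl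
  | n + 1, h => by
    have ih := hist_congr A r n (fun i hi => h i (Nat.lt_succ_of_lt hi))
    simp [Resolver.hist, ih, h n (Nat.lt_succ_self n)]

theorem run_congr (A : BAut σ Q) (r : Resolver A) {w w' : ℕ → σ} :
    ∀ n, (∀ i < n, w' i = w i) → r.run w' n = r.run w n
  | 0, _ => rfl
  | n + 1, h => by
    have ih := hist_congr A r n (fun i hi => h i (Nat.lt_succ_of_lt hi))
    simp [Resolver.run, ih, h n (Nat.lt_succ_self n)]

theorem hist_map_fst (A : BAut σ Q) (r : Resolver A) (w : ℕ → σ) :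
    ∀ n, (r.hist w n).map Prod.fst = (List.range n).map w
  | 0 => rfl
  | n + 1 => by
    simp [Resolver.hist, hist_map_fst A r w n, List.range_succ]

theorem s1_absorb (r : Resolver (safeAut σ)) (w : ℕ → σ) {n : ℕ}
    (h : r.run w n = S2.s1) : ∀ m, n ≤ m → r.run w m = S2.s1 := by
  intro m hm
  refine Nat.le_induction h ?_ m hm
  intro k hk ih
  have hc := r.consistent (r.hist w k) (w k)
  rw [hlast_hist, ih] at hc
  simpa [Resolver.run, safeAut] using hc

/-- The finite prefix `l` is "good" for `P`: some word of `P` starts with `l`. -/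
def goodL (P : Set (ℕ → σ)) (l : List σ) : Prop :=
  ∃ u ∈ P, ∀ i, (hi : i < l.length) → u i = l[i]

theorem goodL_range (P : Set (ℕ → σ)) (w : ℕ → σ) (m : ℕ) :
    goodL P ((List.range m).map w) ↔ ∃ u ∈ P, ∀ i < m, u i = w i := by
  constructor
  · rintro ⟨u, hu, h⟩
    refine ⟨u, hu, fun i hi => ?_⟩
    have := h i (by simpa using hi)
    simpa using this
  · rintro ⟨u, hu, h⟩
    refine ⟨u, hu, fun i hi => ?_⟩
    simp only [List.length_map, List.length_range] at hi
    simp [h i hi]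

open Classical in
/-- The canonical resolver for a property `P`: stay in `s0` as long as the
letters read so far are a prefix of some word of `P`. -/
noncomputable def safeRes (P : Set (ℕ → σ)) : Resolver (safeAut σ) where
  f h a :=
    if (safeAut σ).hlast h = S2.s1 then S2.s1
    else if goodL P (h.map Prod.fst ++ [a]) then S2.s0 else S2.s1
  consistent h a := by
    show (safeAut σ).Δ ((safeAut σ).hlast h) a _
    cases hq : (safeAut σ).hlast h with
    | s0 => trivial
    | s1 =>
      show (if S2.s1 = S2.s1 then S2.s1
        else if goodL P (h.map Prod.fst ++ [a]) then S2.s0 else S2.s1) = S2.s1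
      exact if_pos rfl

open Classical in
theorem safeRes_run (P : Set (ℕ → σ)) (w : ℕ → σ) :
    ∀ n, (safeRes P).run w (n + 1) = S2.s0 ↔ ∃ u ∈ P, ∀ i < n + 1, u i = w i := by
  have key : ∀ n, (safeRes P).run w (n + 1) =
      (if (safeRes P).run w n = S2.s1 then S2.s1
       else if goodL P ((List.range (n + 1)).map w) then S2.s0 else S2.s1) := by
    intro n
    show (safeRes P).f ((safeRes P).hist w n) (w n) = _
    rw [show (safeRes P).f ((safeRes P).hist w n) (w n) =
        (if (safeAut σ).hlast ((safeRes P).hist w n) = S2.s1 then S2.s1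
         else if goodL P (((safeRes P).hist w n).map Prod.fst ++ [w n]) then S2.s0
         else S2.s1) from rfl]
    rw [hlast_hist, hist_map_fst]
    have he : (List.range n).map w ++ [w n] = (List.range (n + 1)).map w := by
      rw [List.range_succ, List.map_append]; rfl
    rw [he]
  intro n
  induction n with
  | zero =>
    rw [key 0]
    have h0 : (safeRes P).run w 0 = S2.s0 := rfl
    rw [h0]
    simp only [reduceCtorEq, if_false]
    rw [← goodL_range]
    constructor
    · intro h
      by_contra hg
      rw [if_neg hg] at h
      exact absurd h (by simp)
    · intro h
      rw [if_pos h]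
  | succ n ih =>
    rw [key (n + 1)]
    cases h1 : (safeRes P).run w (n + 1) with
    | s0 =>
      simp only [reduceCtorEq, if_false]
      rw [← goodL_range]
      constructor
      · intro h
        by_contra hg
        rw [if_neg hg] at h
        exact absurd h (by simp)
      · intro h
        rw [if_pos h]
    | s1 =>
      simp only [if_true]
      constructor
      · intro h; exact absurd h (by simp)
      · rintro ⟨u, hu, h⟩
        have : (safeRes P).run w (n + 1) = S2.s0 :=
          (ih).mpr ⟨u, hu, fun i hi => h i (Nat.lt_succ_of_lt hi)⟩
        rw [h1] at this
        exact absurd this (by simp)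

theorem lang_safeRes (P : Set (ℕ → σ)) (hP : IsSafety P) :
    (safeAut σ).Lang (safeRes P) = P := by
  ext w
  constructor
  · intro hw
    by_contra hwP
    obtain ⟨n, hn⟩ := hP w hwP
    have hrun : ∀ m, n ≤ m → (safeRes P).run w (m + 1) = S2.s1 := by
      intro m hm
      cases hc : (safeRes P).run w (m + 1) with
      | s1 => rfl
      | s0 =>
        obtain ⟨u, hu, hagree⟩ := (safeRes_run P w m).mp hc
        exact absurd hu (hn u (fun i hi => hagree i (lt_of_lt_of_le hi (le_trans hm (Nat.le_succ m)))))
    obtain ⟨m, hm, hF⟩ := (Filter.frequently_atTop.mp hw) (n + 1)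
    obtain ⟨k, rfl⟩ := Nat.exists_eq_add_of_le hm
    have : (safeRes P).run w (n + 1 + k) = S2.s1 := by
      rcases k with _ | k
      · exact hrun n le_rfl
      · have : n + 1 + (k + 1) = (n + 1 + k) + 1 := by ring
        rw [this]
        exact hrun (n + 1 + k) (by omega)
    rw [show (safeAut σ).F ((safeRes P).run w (n + 1 + k)) =
        ((safeRes P).run w (n + 1 + k) = S2.s0) from rfl, this] at hF
    exact absurd hF (by simp)
  · intro hw
    refine Filter.frequently_atTop.mpr (fun n => ⟨n + 1, Nat.le_succ n, ?_⟩)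
    show (safeRes P).run w (n + 1) = S2.s0
    exact (safeRes_run P w n).mpr ⟨w, hw, fun _ _ => rfl⟩

theorem lang_isSafety (r : Resolver (safeAut σ)) :
    IsSafety ((safeAut σ).Lang r) := by
  intro w hw
  rw [BAut.Lang, Set.mem_setOf_eq, BAut.Acc, Filter.not_frequently] at hw
  obtain ⟨N, hN⟩ := Filter.eventually_atTop.mp hw
  refine ⟨N, fun w' hagree hw' => ?_⟩
  have hs1 : r.run w N = S2.s1 := by
    cases hc : r.run w N with
    | s0 => exact absurd (show (safeAut σ).F (r.run w N) from hc) (hN N le_rfl)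
    | s1 => rfl
  have hs1' : r.run w' N = S2.s1 := by
    rw [run_congr (safeAut σ) r N hagree]; exact hs1
  obtain ⟨m, hm, hF⟩ := Filter.frequently_atTop.mp hw' N
  have : r.run w' m = S2.s1 := s1_absorb r w' hs1' m hm
  rw [show (safeAut σ).F (r.run w' m) = (r.run w' m = S2.s0) from rfl, this] at hF
  exact absurd hF (by simp)

end SafeAux

/-- The one-nondeterministic-step Büchi automaton specifies exactly
the hyperproperty of all safety properties. -/
theorem safeAut_hyper_eq_safety (σ : Type) [Fintype σ] :
    (safeAut σ).Hyper = {P : Set (ℕ → σ) | IsSafety P} := by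
  ext P
  constructor
  · rintro ⟨r, rfl⟩
    exact SafeAux.lang_isSafety r
  · intro hP
    exact ⟨SafeAux.safeRes P, SafeAux.lang_safeRes P hP⟩
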